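/- arXiv:1905.11252 — 2 statements merged into one kernel-verified Lean document; each statement's English description precedes it below -/
import Mathlib

section
/- Let N be a power of two, τ ∈ [0, N) with integer part L = ⌊τ⌋ and fractional part λ = τ - L, and let s_{I1}, s_{I2}, k ∈ {0,...,N-1}. Define A_{k,i}(s) = sin(π(s - k - τ)⌈τ⌉_i/N)/sin(π(s - k - τ)/N) with ⌈τ⌉_1 = ⌈τ⌉, ⌈τ⌉_2 = N - ⌈τ⌉ (using the continuous extension at removable singularities). For any shift δ ∈ {0,...,N-1} with s_{I1} + δ < N and s_{I2} + δ < N, setting s'_{Ii} = s_{Ii} + δ and k' = [k + δ] mod N, one has (A'_{k,1})² = (A_{k,1})², (A'_{k,2})² = (A_{k,2})², and A'_{k,1}A'_{k,2} = A_{k,1}A_{k,2}, where A'_{k,i} is computed with s'_{Ii} and k' in place of s_{Ii} and k. -/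
open Real

/-- `sin (M x) / sin x` with its continuous extension `M cos (M x) / cos x`
at the removable singularities where `sin x = 0`. -/
noncomputable def sinRatio (M x : ℝ) : ℝ :=
  if Real.sin x = 0 then M * Real.cos (M * x) / Real.cos x else Real.sin (M * x) / Real.sin x

/-- Interference amplitude factor `sin (π (s - k - τ) c / N) / sin (π (s - k - τ) / N)`
(continuously extended), where `c` is `⌈τ⌉` or `N - ⌈τ⌉`. -/
noncomputable def Amp (N τ c s k : ℝ) : ℝ := sinRatio c (Real.pi * (s - k - τ) / N)

/-! Reducing `k + δ` modulo `N` subtracts `j N` for an integer `j`, so every argument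
`π (s - k - τ) / N` moves by `j π`. For an integer `m`, `x ↦ sin (m x) / sin x` (and its
continuous extension) picks up the sign `(-1) ^ ((m - 1) j)` under `x ↦ x + j π`. Squaring
removes the signs, and in the product of the two factors (`m = ⌈τ⌉` and `m = N - ⌈τ⌉`) the
exponents add up to `(N - 2) j`, which is even since `N` is. -/

lemma sinRatio_add_int_mul_pi (m j : ℤ) (x : ℝ) :
    sinRatio m (x + j * π) = (-1) ^ ((m - 1) * j) * sinRatio m x := by
  have hmx : (m : ℝ) * (x + j * π) = m * x + ((m * j : ℤ) : ℝ) * π := by push_cast; ring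
  have hsign : (-1 : ℝ) ^ (m * j) = (-1) ^ ((m - 1) * j) * (-1) ^ j := by
    rw [← zpow_add₀ (by norm_num)]; ring_nf
  have hunit : (-1 : ℝ) ^ j ≠ 0 := zpow_ne_zero _ (by norm_num)
  unfold sinRatio
  simp only [hmx, sin_add_int_mul_pi, cos_add_int_mul_pi, mul_eq_zero, hunit, false_or, hsign]
  split_ifs <;> field_simp

lemma Amp_add_sub_int_mul (N τ s k δ : ℝ) (m j : ℤ) (hN : N ≠ 0) :
    Amp N τ m (s + δ) (k + δ - j * N) = (-1) ^ ((m - 1) * j) * Amp N τ m s k := by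
  unfold Amp
  rw [← sinRatio_add_int_mul_pi]
  congr 1
  field_simp
  ring

lemma neg_one_zpow_mul_sq (n : ℤ) (a : ℝ) : ((-1) ^ n * a) ^ 2 = a ^ 2 := by
  rw [mul_pow, ← sq_abs ((-1 : ℝ) ^ n), abs_neg_one_zpow, one_pow, one_mul]

theorem interference_amplitude_shift_invariance_general
    (SF N : ℕ) (hN : N = 2 ^ SF) (hSF : 1 ≤ SF)
    (τ : ℝ) (sI1 sI2 k : ℕ) (δ : ℕ) (k' : ℕ) (hk' : k' = (k + δ) % N) :
    (Amp N τ (⌈τ⌉ : ℝ) (sI1 + δ : ℕ) k') ^ 2 = (Amp N τ (⌈τ⌉ : ℝ) sI1 k) ^ 2 ∧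
    (Amp N τ ((N : ℝ) - (⌈τ⌉ : ℝ)) (sI2 + δ : ℕ) k') ^ 2
      = (Amp N τ ((N : ℝ) - (⌈τ⌉ : ℝ)) sI2 k) ^ 2 ∧
    Amp N τ (⌈τ⌉ : ℝ) (sI1 + δ : ℕ) k' * Amp N τ ((N : ℝ) - (⌈τ⌉ : ℝ)) (sI2 + δ : ℕ) k'
      = Amp N τ (⌈τ⌉ : ℝ) sI1 k * Amp N τ ((N : ℝ) - (⌈τ⌉ : ℝ)) sI2 k := by
  have hN0 : (N : ℝ) ≠ 0 := by rw [hN]; positivity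
  have hN_even : Even (N : ℤ) := by
    rw [hN]; exact_mod_cast (Nat.even_pow' (by omega)).mpr even_two
  set j : ℤ := (((k + δ) / N : ℕ) : ℤ)
  have hk'_cast : (k' : ℝ) = k + δ - j * N := by
    have hdiv : (((k + δ) % N : ℕ) : ℝ) + N * ((k + δ) / N : ℕ) = k + δ := by
      exact_mod_cast Nat.mod_add_div (k + δ) N
    rw [hk']
    simp only [j, Int.cast_natCast]
    linear_combination hdiv
  have hc₂ : (N : ℝ) - ⌈τ⌉ = ((N - ⌈τ⌉ : ℤ) : ℝ) := by push_cast; ring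
  simp only [hc₂, Nat.cast_add, hk'_cast, Amp_add_sub_int_mul _ _ _ _ _ _ _ hN0]
  refine ⟨neg_one_zpow_mul_sq _ _, neg_one_zpow_mul_sq _ _, ?_⟩
  have hsigns : (-1 : ℝ) ^ ((⌈τ⌉ - 1) * j) * (-1) ^ ((N - ⌈τ⌉ - 1) * j) = 1 := by
    rw [← zpow_add₀ (by norm_num)]
    apply Even.neg_one_zpow
    rw [show (⌈τ⌉ - 1) * j + (N - ⌈τ⌉ - 1) * j = (N - 2) * j by ring]
    exact (hN_even.sub even_two).mul_right j
  linear_combination (Amp N τ ⌈τ⌉ sI1 k * Amp N τ ((N - ⌈τ⌉ : ℤ) : ℝ) sI2 k) * hsigns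

theorem interference_amplitude_shift_invariance
    (SF N : ℕ) (hN : N = 2 ^ SF) (hSF : 1 ≤ SF)
    (τ : ℝ) (hτ0 : 0 ≤ τ) (hτN : τ < N)
    (L : ℤ) (hL : L = ⌊τ⌋) (lam : ℝ) (hlam : lam = τ - L)
    (sI1 sI2 k : ℕ) (hs1 : sI1 < N) (hs2 : sI2 < N) (hk : k < N)
    (δ : ℕ) (hδ1 : sI1 + δ < N) (hδ2 : sI2 + δ < N)
    (k' : ℕ) (hk' : k' = (k + δ) % N) :
    (Amp N τ (⌈τ⌉ : ℝ) (sI1 + δ : ℕ) k') ^ 2 = (Amp N τ (⌈τ⌉ : ℝ) sI1 k) ^ 2 ∧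
    (Amp N τ ((N : ℝ) - (⌈τ⌉ : ℝ)) (sI2 + δ : ℕ) k') ^ 2
      = (Amp N τ ((N : ℝ) - (⌈τ⌉ : ℝ)) sI2 k) ^ 2 ∧
    Amp N τ (⌈τ⌉ : ℝ) (sI1 + δ : ℕ) k' * Amp N τ ((N : ℝ) - (⌈τ⌉ : ℝ)) (sI2 + δ : ℕ) k'
      = Amp N τ (⌈τ⌉ : ℝ) sI1 k * Amp N τ ((N : ℝ) - (⌈τ⌉ : ℝ)) sI2 k :=
  interference_amplitude_shift_invariance_general SF N hN hSF τ sI1 sI2 k δ k' hk'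
end

section
/- Let N be a power of two, τ ∈ [0, N), L = ⌊τ⌋, λ = τ - L, and s_{I1} ≥ s_{I2} in {0,...,N-1}. Define the phase difference Δ(k, s_{I1}, s_{I2}) = (π/N)[(λ - L)N + (s_{I1} - s_{I2})(τ - ⌈τ⌉ + 1) + N(s_{I2} - k)]. Then for any δ with s_{I1} + δ < N and s_{I2} + δ < N, and k' = [k + δ] mod N, cos(Δ(k', s_{I1}+δ, s_{I2}+δ)) = cos(Δ(k, s_{I1}, s_{I2})). -/
/-!
Shifting both sources by `δ` leaves `s₁ - s₂` unchanged and changes `s₂ - k` only through the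
reduction `k' = k + δ - N q`, so the phase grows by `(π / N) · N² q = π N q`, a multiple of `2π`
because `N` is even.
-/

open Real

theorem cos_pi_div_mul_add_sq_mul {N : ℕ} (hN : Even N) (x : ℝ) (q : ℤ) :
    cos (π / N * (x + N ^ 2 * q)) = cos (π / N * x) := by
  obtain ⟨m, rfl⟩ := hN
  rcases Nat.eq_zero_or_pos m with rfl | hm
  · simp
  have hshift :
      π / ↑(m + m) * (x + ↑(m + m) ^ 2 * q) = π / ↑(m + m) * x + ↑(m * q) * (2 * π) := by
    push_cast
    field_simp
    ring
  rw [hshift, cos_add_int_mul_two_pi]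

theorem interference_phase_shift_invariance_general
    (SF N : ℕ) (hN : N = 2 ^ SF) (hSF : 1 ≤ SF)
    (τ : ℝ)
    (L : ℤ) (lam : ℝ)
    (sI1 sI2 k : ℕ)
    (δ : ℕ)
    (k' : ℕ) (hk' : k' = (k + δ) % N)
    (Δ : ℝ → ℝ → ℝ → ℝ)
    (hΔ : ∀ k₀ s₁ s₂ : ℝ, Δ k₀ s₁ s₂ = (Real.pi / N) *
      ((lam - L) * N + (s₁ - s₂) * (τ - (⌈τ⌉ : ℝ) + 1) + N * (s₂ - k₀))) :
    Real.cos (Δ (k' : ℝ) ((sI1 + δ : ℕ) : ℝ) ((sI2 + δ : ℕ) : ℝ))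
      = Real.cos (Δ (k : ℝ) (sI1 : ℝ) (sI2 : ℝ)) := by
  have hEven : Even N := hN ▸ Nat.even_pow.2 ⟨even_two, by omega⟩
  set q := (k + δ) / N
  have hreduce : (k' : ℝ) + N * q = k + δ := by
    rw [hk']
    exact_mod_cast Nat.mod_add_div (k + δ) N
  rw [hΔ, hΔ, eq_comm, ← cos_pi_div_mul_add_sq_mul hEven _ q]
  congr 2
  push_cast
  linear_combination (N : ℝ) * hreduce

theorem interference_phase_shift_invariance
    (SF N : ℕ) (hN : N = 2 ^ SF) (hSF : 1 ≤ SF)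
    (τ : ℝ) (hτ0 : 0 ≤ τ) (hτN : τ < N)
    (L : ℤ) (hL : L = ⌊τ⌋) (lam : ℝ) (hlam : lam = τ - L)
    (sI1 sI2 k : ℕ) (hs1 : sI1 < N) (hs2 : sI2 < N) (hk : k < N) (hs12 : sI2 ≤ sI1)
    (δ : ℕ) (hδ1 : sI1 + δ < N) (hδ2 : sI2 + δ < N)
    (k' : ℕ) (hk' : k' = (k + δ) % N)
    (Δ : ℝ → ℝ → ℝ → ℝ)
    (hΔ : ∀ k₀ s₁ s₂ : ℝ, Δ k₀ s₁ s₂ = (Real.pi / N) *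
      ((lam - L) * N + (s₁ - s₂) * (τ - (⌈τ⌉ : ℝ) + 1) + N * (s₂ - k₀))) :
    Real.cos (Δ (k' : ℝ) ((sI1 + δ : ℕ) : ℝ) ((sI2 + δ : ℕ) : ℝ))
      = Real.cos (Δ (k : ℝ) (sI1 : ℝ) (sI2 : ℝ)) :=
  interference_phase_shift_invariance_general SF N hN hSF τ L lam sI1 sI2 k δ k' hk' Δ hΔ
end
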